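/- Under the setup of the selective code generation problem, for any α, ε_E ∈ (0,1) and any selective generator S with P{S(X) ≠ IDK} > 0: R_α(S) ≤ ε_E + R_{α,ε_E}(S), where R_α(S) = P{S(X) ∉ E_α(Y) | S(X) ≠ IDK} is the risk with respect to the true α-entailment set and R_{α,ε_E}(S) = P{S(X) ∉ Ê_{α,ε_E}(Y) | S(X) ≠ IDK} is the risk with respect to the estimated entailment set. -/

import Mathlib

open MeasureTheory ProbabilityTheory Set
open scoped ENNReal

/-!
Conditioning the product measure on a cylinder `C₁ × Ω₂` only conditions the first factor, and the
event `G (X ω₁) ∉ Eα (Y ω₁)` is a cylinder as well. For every `ω₁` in it, the guarantee on `Ehat`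
says that `ω₂ ↦ G (X ω₁) ∈ Ehat (Y ω₁) ω₂` has probability at most `ε`, so the fibre of the event
`G (X ω₁) ∉ Ehat (Y ω₁) ω₂` has probability at least `1 - ε`; integrating over `ω₁` (Tonelli) gives
the bound. No event is assumed measurable, so the integration runs over measurable hulls.
-/

namespace MeasureTheory.Measure

variable {α β : Type*} [MeasurableSpace α] [MeasurableSpace β]
  {μ : Measure α} {ν : Measure β} [IsProbabilityMeasure ν]

theorem le_prod_add_mul_of_forall_compl_preimage_le {A : Set α} {E : Set (α × β)} {ε : ℝ≥0∞}
    (h : ∀ x ∈ A, ν (Prod.mk x ⁻¹' E)ᶜ ≤ ε) :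
    μ A ≤ μ.prod ν E + ε * μ A := by
  set B := toMeasurable (μ.prod ν) E
  have hB : MeasurableSet B := measurableSet_toMeasurable _ E
  set f : α → ℝ≥0∞ := fun x => ν (Prod.mk x ⁻¹' B)
  have hf : Measurable f := measurable_measure_prodMk_left hB
  have hA_sub : A ⊆ {x | 1 ≤ f x + ε} := fun x hx =>
    calc 1 = ν (Prod.mk x ⁻¹' E ∪ (Prod.mk x ⁻¹' E)ᶜ) := by rw [union_compl_self, measure_univ]
      _ ≤ ν (Prod.mk x ⁻¹' E) + ν (Prod.mk x ⁻¹' E)ᶜ := measure_union_le _ _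
      _ ≤ f x + ε := add_le_add
          (measure_mono fun _ hy => subset_toMeasurable _ E hy) (h x hx)
  set A' := toMeasurable μ A ∩ {x | 1 ≤ f x + ε}
  have hA' : MeasurableSet A' :=
    (measurableSet_toMeasurable μ A).inter ((hf.add_const ε) measurableSet_Ici)
  have hμA' : μ A' = μ A :=
    le_antisymm ((measure_mono inter_subset_left).trans_eq (measure_toMeasurable A))
      (measure_mono (subset_inter (subset_toMeasurable μ A) hA_sub))
  calc μ A = ∫⁻ _ in A', 1 ∂μ := by rw [setLIntegral_const, one_mul, hμA']
    _ ≤ ∫⁻ x in A', f x + ε ∂μ := setLIntegral_mono (hf.add_const ε) fun x hx => hx.2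
    _ = ∫⁻ x in A', f x ∂μ + ε * μ A := by
        rw [lintegral_add_right _ measurable_const, setLIntegral_const, hμA']
    _ ≤ ∫⁻ x, f x ∂μ + ε * μ A := by gcongr ?_ + _; exact setLIntegral_le_lintegral _ _
    _ = μ.prod ν E + ε * μ A := by
        rw [← prod_apply hB, measure_toMeasurable]

theorem cond_prod_univ [SFinite μ] (s : Set α) : (μ.prod ν)[|s ×ˢ univ] = μ[|s].prod ν := by
  rw [ProbabilityTheory.cond, ProbabilityTheory.cond, prod_smul_left, restrict_prod_eq_prod_univ,
    prod_prod, measure_univ, mul_one]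

theorem cond_prod_univ_le_add_of_forall_compl_preimage_le [SFinite μ] {s A : Set α}
    {E : Set (α × β)} {ε : ℝ≥0∞} (h : ∀ x ∈ A, ν (Prod.mk x ⁻¹' E)ᶜ ≤ ε) :
    (μ.prod ν)[|s ×ˢ univ] (A ×ˢ univ) ≤ ε + (μ.prod ν)[|s ×ˢ univ] E := by
  rw [cond_prod_univ, prod_prod, measure_univ, mul_one, add_comm]
  calc μ[|s] A ≤ μ[|s].prod ν E + ε * μ[|s] A := le_prod_add_mul_of_forall_compl_preimage_le h
    _ ≤ μ[|s].prod ν E + ε := by gcongr; exact mul_le_of_le_one_right' prob_le_one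

end MeasureTheory.Measure

theorem fdr_ce_bound_general {Ω₁ Ω₂ 𝒳 𝒴 : Type*}
    [MeasurableSpace Ω₁] [MeasurableSpace Ω₂]
    (μ₁ : Measure Ω₁) (μ₂ : Measure Ω₂)
    [IsProbabilityMeasure μ₁] [IsProbabilityMeasure μ₂]
    (X : Ω₁ → 𝒳) (Y : Ω₁ → 𝒴) (G : 𝒳 → 𝒴) (S : 𝒳 → Option 𝒴)
    (ε : ℝ)
    (Eα : 𝒴 → Set 𝒴) (Ehat : 𝒴 → Ω₂ → Set 𝒴)
    (hpoint : ∀ (y yb : 𝒴), yb ∉ Eα y → μ₂ {ω₂ | yb ∈ Ehat y ω₂} ≤ ENNReal.ofReal ε)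
    (C : Set (Ω₁ × Ω₂)) (hC : C = {ω | S (X ω.1) ≠ none}) :
    (μ₁.prod μ₂)[|C] {ω | G (X ω.1) ∉ Eα (Y ω.1)}
      ≤ ENNReal.ofReal ε
        + (μ₁.prod μ₂)[|C] {ω | G (X ω.1) ∉ Ehat (Y ω.1) ω.2} := by
  have hC_prod : C = {x | S (X x) ≠ none} ×ˢ univ := by rw [hC]; ext; simp
  have hD : {ω : Ω₁ × Ω₂ | G (X ω.1) ∉ Eα (Y ω.1)} = {x | G (X x) ∉ Eα (Y x)} ×ˢ univ := by
    ext; simp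
  rw [hC_prod, hD]
  refine Measure.cond_prod_univ_le_add_of_forall_compl_preimage_le fun x hx => ?_
  convert hpoint (Y x) (G (X x)) hx using 2
  ext; simp

/-- Lemma 1 (main lemma): R_α(S) ≤ ε_E + R_{α,ε_E}(S). -/
theorem fdr_ce_bound {Ω₁ Ω₂ 𝒳 𝒴 : Type*}
    [MeasurableSpace Ω₁] [MeasurableSpace Ω₂]
    (μ₁ : Measure Ω₁) (μ₂ : Measure Ω₂)
    [IsProbabilityMeasure μ₁] [IsProbabilityMeasure μ₂]
    (X : Ω₁ → 𝒳) (Y : Ω₁ → 𝒴) (G : 𝒳 → 𝒴) (S : 𝒳 → Option 𝒴)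
    (hS : ∀ x, S x = none ∨ S x = some (G x))
    (α ε : ℝ) (hα : α ∈ Set.Ioo (0 : ℝ) 1) (hε : ε ∈ Set.Ioo (0 : ℝ) 1)
    (Eα : 𝒴 → Set 𝒴) (Ehat : 𝒴 → Ω₂ → Set 𝒴)
    (hpoint : ∀ (y yb : 𝒴), yb ∉ Eα y → μ₂ {ω₂ | yb ∈ Ehat y ω₂} ≤ ENNReal.ofReal ε)
    (C : Set (Ω₁ × Ω₂)) (hC : C = {ω | S (X ω.1) ≠ none})
    (hpos : 0 < (μ₁.prod μ₂) C) :
    (μ₁.prod μ₂)[|C] {ω | G (X ω.1) ∉ Eα (Y ω.1)}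
      ≤ ENNReal.ofReal ε
        + (μ₁.prod μ₂)[|C] {ω | G (X ω.1) ∉ Ehat (Y ω.1) ω.2} :=
  fdr_ce_bound_general μ₁ μ₂ X Y G S ε Eα Ehat hpoint C hC
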